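/- arXiv:2201.13158 — 4 statements merged into one kernel-verified Lean document; each statement's English description precedes it below -/
import Mathlib

section
/- For every player i and every coalition C containing i, δ⁺(⊵_i,C) = |N⁺_i ∖ C| + Σ_{f ∈ N⁺_i ∖ C} |{b ∈ N⁺_i : f ▷_i b}|. -/
/-! Basic machinery: weak orders, linear extensions, Kendall-tau,
and the directed Hausdorff–Kendall-tau distance. -/

section Orders

variable {P : Type*}

/-- The strict part `x ▷ y` of a relation `R`. -/
def strictOf (R : P → P → Prop) (x y : P) : Prop := R x y ∧ ¬ R y x

/-- The indifference part `x ∼ y` of a relation `R`. -/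
def indiffOf (R : P → P → Prop) (x y : P) : Prop := R x y ∧ R y x

/-- `R` is a weak order (total preorder) on the finite set `S`. -/
structure IsWeakOrderOn (S : Finset P) (R : P → P → Prop) : Prop where
  refl : ∀ x ∈ S, R x x
  trans : ∀ x ∈ S, ∀ y ∈ S, ∀ z ∈ S, R x y → R y z → R x z
  total : ∀ x ∈ S, ∀ y ∈ S, R x y ∨ R y x

/-- `A` is a linear extension on `S` of the weak order `R`: a strict total
order on `S` which is consistent with the strict part of `R`. -/
structure IsLinExtOn (S : Finset P) (R : P → P → Prop) (A : P → P → Prop) : Prop where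
  irrefl : ∀ x ∈ S, ¬ A x x
  trans : ∀ x ∈ S, ∀ y ∈ S, ∀ z ∈ S, A x y → A y z → A x z
  total : ∀ x ∈ S, ∀ y ∈ S, x ≠ y → A x y ∨ A y x
  extend : ∀ x ∈ S, ∀ y ∈ S, strictOf R x y → A x y

/-- The Kendall-tau distance between two strict (linear) orders on `S`:
the number of pairs ordered oppositely by the two orders. -/
noncomputable def kendallTau (S : Finset P) (A B : P → P → Prop) : ℕ :=
  Set.ncard {p : P × P | p.1 ∈ S ∧ p.2 ∈ S ∧ A p.1 p.2 ∧ B p.2 p.1}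

/-- The directed Hausdorff–Kendall-tau distance `→τ(R1,R2)` between weak orders on `S`:
the maximum over linear extensions `B` of `R2` of the minimum over linear
extensions `A` of `R1` of `τ(A,B)`. -/
noncomputable def dirTau (S : Finset P) (R1 R2 : P → P → Prop) : ℕ :=
  sSup { n : ℕ | ∃ B : P → P → Prop, IsLinExtOn S R2 B ∧
    n = sInf { m : ℕ | ∃ A : P → P → Prop, IsLinExtOn S R1 A ∧ m = kendallTau S A B } }

/-- The (undirected) Hausdorff–Kendall-tau distance `τ*`. -/
noncomputable def hkTau (S : Finset P) (R1 R2 : P → P → Prop) : ℕ :=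
  max (dirTau S R1 R2) (dirTau S R2 R1)

end Orders

/-! FEN-hedonic games with distance-based preferences. -/

section Game

/-- A FEN preference for player `i`: disjoint sets of friends and enemies
(not containing `i`) together with weak orders on the friends and on the enemies. -/
structure FENPref (P : Type*) (i : P) where
  friends : Finset P
  enemies : Finset P
  Rp : P → P → Prop
  Rm : P → P → Prop
  disj : Disjoint friends enemies
  self_not_friend : i ∉ friends
  self_not_enemy : i ∉ enemies
  wo_p : IsWeakOrderOn friends Rp
  wo_m : IsWeakOrderOn enemies Rm

variable {P : Type*} {i : P}

/-- The weak order `⊵⁺_i` on `N⁺_i ∪ {i}`: the friends, ordered by `⊵_i`,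
all strictly above `i`. -/
def FENPref.prefPlus (pr : FENPref P i) (x y : P) : Prop :=
  (x ∈ pr.friends ∧ y ∈ pr.friends ∧ pr.Rp x y) ∨
  (x ∈ pr.friends ∧ y = i) ∨
  (x = i ∧ y = i)

/-- The weak order `⊵⁻_i` on `N⁻_i ∪ {i}`: `i` strictly above all enemies,
which are ordered by `⊵_i`. -/
def FENPref.prefMinus (pr : FENPref P i) (x y : P) : Prop :=
  (x = i ∧ y = i) ∨
  (x = i ∧ y ∈ pr.enemies) ∨
  (x ∈ pr.enemies ∧ y ∈ pr.enemies ∧ pr.Rm x y)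

/-- The weak order `C⁺_i` on `N⁺_i ∪ {i}`: friends in `C` strictly above `i`,
ordered by `⊵_i`; friends not in `C` strictly below `i`, ordered by the reverse of `⊵_i`. -/
def FENPref.coalPlus (pr : FENPref P i) (C : Finset P) (x y : P) : Prop :=
  (x ∈ pr.friends ∧ x ∈ C ∧ y ∈ pr.friends ∧ y ∈ C ∧ pr.Rp x y) ∨
  ((x ∈ pr.friends ∧ x ∈ C) ∧ (y = i ∨ (y ∈ pr.friends ∧ y ∉ C))) ∨
  (x = i ∧ (y = i ∨ (y ∈ pr.friends ∧ y ∉ C))) ∨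
  (x ∈ pr.friends ∧ x ∉ C ∧ y ∈ pr.friends ∧ y ∉ C ∧ pr.Rp y x)

/-- The weak order `C⁻_i` on `N⁻_i ∪ {i}`: enemies in `C` strictly above `i`,
ordered by the reverse of `⊵_i`; enemies not in `C` strictly below `i`, ordered by `⊵_i`. -/
def FENPref.coalMinus (pr : FENPref P i) (C : Finset P) (x y : P) : Prop :=
  (x ∈ pr.enemies ∧ x ∈ C ∧ y ∈ pr.enemies ∧ y ∈ C ∧ pr.Rm y x) ∨
  ((x ∈ pr.enemies ∧ x ∈ C) ∧ (y = i ∨ (y ∈ pr.enemies ∧ y ∉ C))) ∨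
  (x = i ∧ (y = i ∨ (y ∈ pr.enemies ∧ y ∉ C))) ∨
  (x ∈ pr.enemies ∧ x ∉ C ∧ y ∈ pr.enemies ∧ y ∉ C ∧ pr.Rm x y)

variable [DecidableEq P]

/-- `δ⁺(⊵_i, C) = →τ(⊵⁺_i, C⁺_i)`. -/
noncomputable def FENPref.deltaPlus (pr : FENPref P i) (C : Finset P) : ℕ :=
  dirTau (insert i pr.friends) pr.prefPlus (pr.coalPlus C)

/-- `δ⁻(⊵_i, C) = →τ(⊵⁻_i, C⁻_i)`. -/
noncomputable def FENPref.deltaMinus (pr : FENPref P i) (C : Finset P) : ℕ :=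
  dirTau (insert i pr.enemies) pr.prefMinus (pr.coalMinus C)

/-- `δ(⊵_i, C) = δ⁺(⊵_i, C) + δ⁻(⊵_i, C)`. -/
noncomputable def FENPref.delta (pr : FENPref P i) (C : Finset P) : ℕ :=
  pr.deltaPlus C + pr.deltaMinus C

end Game

/-! Auxiliary machinery for the proof. -/

section Aux

variable {P : Type*}

def refineRel (R L : P → P → Prop) (x y : P) : Prop :=
  strictOf R x y ∨ (R x y ∧ R y x ∧ L x y)

lemma IsLinExtOn.asymm {S : Finset P} {R A : P → P → Prop} (h : IsLinExtOn S R A)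
    {x y : P} (hx : x ∈ S) (hy : y ∈ S) (hxy : A x y) (hyx : A y x) : False :=
  h.irrefl x hx (h.trans x hx y hy x hx hxy hyx)

lemma refine_isLinExtOn {S : Finset P} {R L : P → P → Prop} (hR : IsWeakOrderOn S R)
    (hI : ∀ x ∈ S, ¬ L x x)
    (hT : ∀ x ∈ S, ∀ y ∈ S, ∀ z ∈ S, L x y → L y z → L x z)
    (hTot : ∀ x ∈ S, ∀ y ∈ S, x ≠ y → L x y ∨ L y x) :
    IsLinExtOn S R (refineRel R L) := by
  constructor
  · rintro x hx (⟨h1, h2⟩ | ⟨_, _, h3⟩)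
    · exact h2 h1
    · exact hI x hx h3
  · rintro x hx y hy z hz (⟨h1, h2⟩ | ⟨h1, h1', hL1⟩) (⟨h3, h4⟩ | ⟨h3, h3', hL2⟩)
    · exact Or.inl ⟨hR.trans x hx y hy z hz h1 h3,
        fun hzx => h2 (hR.trans y hy z hz x hx h3 hzx)⟩
    · exact Or.inl ⟨hR.trans x hx y hy z hz h1 h3,
        fun hzx => h2 (hR.trans y hy z hz x hx h3 hzx)⟩
    · exact Or.inl ⟨hR.trans x hx y hy z hz h1 h3,
        fun hzx => h4 (hR.trans z hz x hx y hy hzx h1)⟩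
    · exact Or.inr ⟨hR.trans x hx y hy z hz h1 h3,
        hR.trans z hz y hy x hx h3' h1', hT x hx y hy z hz hL1 hL2⟩
  · intro x hx y hy hne
    rcases hR.total x hx y hy with h | h
    · by_cases h' : R y x
      · rcases hTot x hx y hy hne with hL | hL
        · exact Or.inl (Or.inr ⟨h, h', hL⟩)
        · exact Or.inr (Or.inr ⟨h', h, hL⟩)
      · exact Or.inl (Or.inl ⟨h, h'⟩)
    · by_cases h' : R x y
      · rcases hTot x hx y hy hne with hL | hL
        · exact Or.inl (Or.inr ⟨h', h, hL⟩)
        · exact Or.inr (Or.inr ⟨h, h', hL⟩)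
      · exact Or.inr (Or.inl ⟨h, h'⟩)
  · intro x _ y _ h
    exact Or.inl h

/-- Refining a weak order by a linear extension of anything gives a linear extension. -/
lemma refine_isLinExtOn' {S : Finset P} {R R' B : P → P → Prop} (hR : IsWeakOrderOn S R)
    (hB : IsLinExtOn S R' B) : IsLinExtOn S R (refineRel R B) :=
  refine_isLinExtOn hR hB.irrefl hB.trans hB.total

end Aux

set_option linter.unusedSectionVars false

section Aux2

variable {P : Type*} [DecidableEq P] {i : P} (pr : FENPref P i)

lemma prefPlus_wo : IsWeakOrderOn (insert i pr.friends) pr.prefPlus := by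
  have hiF := pr.self_not_friend
  constructor
  · intro x hx
    rcases Finset.mem_insert.mp hx with rfl | hx
    · exact Or.inr (Or.inr ⟨rfl, rfl⟩)
    · exact Or.inl ⟨hx, hx, pr.wo_p.refl x hx⟩
  · rintro x hx y hy z hz (⟨hxF, hyF, h1⟩ | ⟨hxF, hyI⟩ | ⟨hxI, hyI⟩)
      (⟨hyF', hzF, h2⟩ | ⟨hyF', hzI⟩ | ⟨hyI', hzI⟩) <;>
      first
      | (rw [hyI] at hyF'; exact absurd hyF' hiF)
      | (rw [hyI'] at hyF; exact absurd hyF hiF)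
      | skip
    · exact Or.inl ⟨hxF, hzF, pr.wo_p.trans x hxF y hyF z hzF h1 h2⟩
    · exact Or.inr (Or.inl ⟨hxF, hzI⟩)
    · exact Or.inr (Or.inl ⟨hxF, hzI⟩)
    · exact Or.inr (Or.inr ⟨hxI, hzI⟩)
  · intro x hx y hy
    rcases Finset.mem_insert.mp hx with rfl | hxF
    · rcases Finset.mem_insert.mp hy with rfl | hyF
      · exact Or.inl (Or.inr (Or.inr ⟨rfl, rfl⟩))
      · exact Or.inr (Or.inr (Or.inl ⟨hyF, rfl⟩))
    · rcases Finset.mem_insert.mp hy with rfl | hyF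
      · exact Or.inl (Or.inr (Or.inl ⟨hxF, rfl⟩))
      · rcases pr.wo_p.total x hxF y hyF with h | h
        · exact Or.inl (Or.inl ⟨hxF, hyF, h⟩)
        · exact Or.inr (Or.inl ⟨hyF, hxF, h⟩)

lemma coalPlus_wo (C : Finset P) : IsWeakOrderOn (insert i pr.friends) (pr.coalPlus C) := by
  have hiF := pr.self_not_friend
  constructor
  · intro x hx
    rcases Finset.mem_insert.mp hx with rfl | hx
    · exact Or.inr (Or.inr (Or.inl ⟨rfl, Or.inl rfl⟩))
    · by_cases hC : x ∈ C
      · exact Or.inl ⟨hx, hC, hx, hC, pr.wo_p.refl x hx⟩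
      · exact Or.inr (Or.inr (Or.inr ⟨hx, hC, hx, hC, pr.wo_p.refl x hx⟩))
  · rintro x hx y hy z hz
      (⟨hxF, hxC, hyF, hyC, h1⟩ | ⟨⟨hxF, hxC⟩, (hyI | ⟨hyF, hyC⟩)⟩ |
        ⟨hxI, (hyI | ⟨hyF, hyC⟩)⟩ | ⟨hxF, hxC, hyF, hyC, h1⟩)
      (⟨hyF', hyC', hzF, hzC, h2⟩ | ⟨⟨hyF', hyC'⟩, hz2⟩ | ⟨hyI', hz2⟩ |
        ⟨hyF', hyC', hzF, hzC, h2⟩) <;>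
      first
      | (rw [hyI] at hyF'; exact absurd hyF' hiF)
      | (rw [hyI'] at hyF; exact absurd hyF hiF)
      | exact absurd hyC' hyC
      | exact absurd hyC hyC'
      | skip
    · exact Or.inl ⟨hxF, hxC, hzF, hzC, pr.wo_p.trans x hxF y hyF z hzF h1 h2⟩
    · exact Or.inr (Or.inl ⟨⟨hxF, hxC⟩, hz2⟩)
    · exact Or.inr (Or.inl ⟨⟨hxF, hxC⟩, hz2⟩)
    · exact Or.inr (Or.inl ⟨⟨hxF, hxC⟩, Or.inr ⟨hzF, hzC⟩⟩)
    · exact Or.inr (Or.inr (Or.inl ⟨hxI, hz2⟩))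
    · exact Or.inr (Or.inr (Or.inl ⟨hxI, Or.inr ⟨hzF, hzC⟩⟩))
    · exact Or.inr (Or.inr (Or.inr ⟨hxF, hxC, hzF, hzC, pr.wo_p.trans z hzF y hyF' x hxF h2 h1⟩))
  · intro x hx y hy
    rcases Finset.mem_insert.mp hx with rfl | hxF
    · rcases Finset.mem_insert.mp hy with rfl | hyF
      · exact Or.inl (Or.inr (Or.inr (Or.inl ⟨rfl, Or.inl rfl⟩)))
      · by_cases hC : y ∈ C
        · exact Or.inr (Or.inr (Or.inl ⟨⟨hyF, hC⟩, Or.inl rfl⟩))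
        · exact Or.inl (Or.inr (Or.inr (Or.inl ⟨rfl, Or.inr ⟨hyF, hC⟩⟩)))
    · rcases Finset.mem_insert.mp hy with rfl | hyF
      · by_cases hC : x ∈ C
        · exact Or.inl (Or.inr (Or.inl ⟨⟨hxF, hC⟩, Or.inl rfl⟩))
        · exact Or.inr (Or.inr (Or.inr (Or.inl ⟨rfl, Or.inr ⟨hxF, hC⟩⟩)))
      · by_cases hxC : x ∈ C <;> by_cases hyC : y ∈ C
        · rcases pr.wo_p.total x hxF y hyF with h | h
          · exact Or.inl (Or.inl ⟨hxF, hxC, hyF, hyC, h⟩)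
          · exact Or.inr (Or.inl ⟨hyF, hyC, hxF, hxC, h⟩)
        · exact Or.inl (Or.inr (Or.inl ⟨⟨hxF, hxC⟩, Or.inr ⟨hyF, hyC⟩⟩))
        · exact Or.inr (Or.inr (Or.inl ⟨⟨hyF, hyC⟩, Or.inr ⟨hxF, hxC⟩⟩))
        · rcases pr.wo_p.total x hxF y hyF with h | h
          · exact Or.inr (Or.inr (Or.inr (Or.inr ⟨hyF, hyC, hxF, hxC, h⟩)))
          · exact Or.inl (Or.inr (Or.inr (Or.inr ⟨hxF, hxC, hyF, hyC, h⟩)))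


lemma ppff {x y : P} (hx : x ∈ pr.friends) (hy : y ∈ pr.friends) :
    pr.prefPlus x y ↔ pr.Rp x y := by
  have hiF := pr.self_not_friend
  constructor
  · rintro (⟨_, _, h⟩ | ⟨_, hyi⟩ | ⟨hxi, _⟩)
    · exact h
    · rw [hyi] at hy; exact absurd hy hiF
    · rw [hxi] at hx; exact absurd hx hiF
  · exact fun h => Or.inl ⟨hx, hy, h⟩

lemma spff {x y : P} (hx : x ∈ pr.friends) (hy : y ∈ pr.friends) :
    strictOf pr.prefPlus x y ↔ strictOf pr.Rp x y := by
  unfold strictOf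
  rw [ppff pr hx hy, ppff pr hy hx]

lemma spi {x : P} (hx : x ∈ pr.friends) : strictOf pr.prefPlus x i := by
  have hiF := pr.self_not_friend
  refine ⟨Or.inr (Or.inl ⟨hx, rfl⟩), ?_⟩
  rintro (⟨hiF', _⟩ | ⟨hiF', _⟩ | ⟨_, hxi⟩)
  · exact hiF hiF'
  · exact hiF hiF'
  · rw [hxi] at hx; exact hiF hx

lemma sp_friend {x y : P} (h : strictOf pr.prefPlus x y) : x ∈ pr.friends := by
  rcases h.1 with ⟨hx, _⟩ | ⟨hx, _⟩ | ⟨hxi, hyi⟩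
  · exact hx
  · exact hx
  · exfalso; apply h.2; rw [hxi, hyi]; exact Or.inr (Or.inr ⟨rfl, rfl⟩)

variable {C : Finset P}

lemma sc1 {x : P} (hx : x ∈ pr.friends) (hxC : x ∈ C) :
    strictOf (pr.coalPlus C) x i := by
  have hiF := pr.self_not_friend
  refine ⟨Or.inr (Or.inl ⟨⟨hx, hxC⟩, Or.inl rfl⟩), ?_⟩
  rintro (⟨hiF', _⟩ | ⟨⟨hiF', _⟩, _⟩ | ⟨_, (hxi | ⟨_, hxC'⟩)⟩ | ⟨hiF', _⟩)
  · exact hiF hiF'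
  · exact hiF hiF'
  · rw [hxi] at hx; exact hiF hx
  · exact hxC' hxC
  · exact hiF hiF'

lemma sc2 {x : P} (hx : x ∈ pr.friends) (hxC : x ∉ C) :
    strictOf (pr.coalPlus C) i x := by
  have hiF := pr.self_not_friend
  refine ⟨Or.inr (Or.inr (Or.inl ⟨rfl, Or.inr ⟨hx, hxC⟩⟩)), ?_⟩
  rintro (⟨_, hxC', _⟩ | ⟨⟨_, hxC'⟩, _⟩ | ⟨hxi, _⟩ | ⟨_, _, hiF', _⟩)
  · exact hxC hxC'
  · exact hxC hxC'
  · rw [hxi] at hx; exact hiF hx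
  · exact hiF hiF'

lemma sc3 {x y : P} (hx : x ∈ pr.friends) (hxC : x ∈ C) (hy : y ∈ pr.friends)
    (h : strictOf pr.Rp x y) : strictOf (pr.coalPlus C) x y := by
  have hiF := pr.self_not_friend
  constructor
  · by_cases hyC : y ∈ C
    · exact Or.inl ⟨hx, hxC, hy, hyC, h.1⟩
    · exact Or.inr (Or.inl ⟨⟨hx, hxC⟩, Or.inr ⟨hy, hyC⟩⟩)
  · rintro (⟨_, _, _, _, hR⟩ | ⟨_, (hxi | ⟨_, hxC'⟩)⟩ | ⟨hyi, _⟩ | ⟨_, _, _, hxC', _⟩)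
    · exact h.2 hR
    · rw [hxi] at hx; exact hiF hx
    · exact hxC' hxC
    · rw [hyi] at hy; exact hiF hy
    · exact hxC' hxC

lemma sc4 {x y : P} (hx : x ∈ pr.friends) (hxC : x ∉ C) (hy : y ∈ pr.friends)
    (h : strictOf pr.Rp x y) : strictOf (pr.coalPlus C) y x := by
  have hiF := pr.self_not_friend
  constructor
  · by_cases hyC : y ∈ C
    · exact Or.inr (Or.inl ⟨⟨hy, hyC⟩, Or.inr ⟨hx, hxC⟩⟩)
    · exact Or.inr (Or.inr (Or.inr ⟨hy, hyC, hx, hxC, h.1⟩))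
  · rintro (⟨_, hxC', _⟩ | ⟨⟨_, hxC'⟩, _⟩ | ⟨hxi, _⟩ | ⟨_, _, _, _, hR⟩)
    · exact hxC hxC'
    · exact hxC hxC'
    · rw [hxi] at hx; exact hiF hx
    · exact h.2 hR

/-- The key characterization of discordant pairs forced for any linear extensions. -/
lemma keyIff {C : Finset P} {B : P → P → Prop}
    (hB : IsLinExtOn (insert i pr.friends) (pr.coalPlus C) B) (x y : P) :
    (x ∈ insert i pr.friends ∧ y ∈ insert i pr.friends ∧ strictOf pr.prefPlus x y ∧ B y x) ↔
    (x ∈ pr.friends ∧ x ∉ C ∧ (y = i ∨ (y ∈ pr.friends ∧ strictOf pr.Rp x y))) := by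
  have hiS : i ∈ insert i pr.friends := Finset.mem_insert_self _ _
  constructor
  · rintro ⟨hxS, hyS, hst, hByx⟩
    have hxF := sp_friend pr hst
    have hxS' : x ∈ insert i pr.friends := Finset.mem_insert_of_mem hxF
    rcases Finset.mem_insert.mp hyS with rfl | hyF
    · refine ⟨hxF, ?_, Or.inl rfl⟩
      by_contra hxC
      exact hB.asymm hyS hxS' hByx (hB.extend x hxS' y hyS (sc1 pr hxF hxC))
    · have hR := (spff pr hxF hyF).mp hst
      refine ⟨hxF, ?_, Or.inr ⟨hyF, hR⟩⟩
      by_contra hxC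
      exact hB.asymm hyS hxS' hByx (hB.extend x hxS' y hyS (sc3 pr hxF hxC hyF hR))
  · rintro ⟨hxF, hxC, (hyi | ⟨hyF, hR⟩)⟩
    · rw [hyi]
      exact ⟨Finset.mem_insert_of_mem hxF, hiS, spi pr hxF,
        hB.extend i hiS x (Finset.mem_insert_of_mem hxF) (sc2 pr hxF hxC)⟩
    · exact ⟨Finset.mem_insert_of_mem hxF, Finset.mem_insert_of_mem hyF,
        (spff pr hxF hyF).mpr hR,
        hB.extend y (Finset.mem_insert_of_mem hyF) x (Finset.mem_insert_of_mem hxF)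
          (sc4 pr hxF hxC hyF hR)⟩

end Aux2

/-- Characterization of `δ⁺`: for every player `i` and coalition `C` containing `i`,
`δ⁺(⊵_i,C) = |N⁺_i ∖ C| + Σ_{f ∈ N⁺_i ∖ C} |{b ∈ N⁺_i : f ▷_i b}|`. -/
theorem deltaPlus_char {P : Type*} [DecidableEq P] {i : P} (pr : FENPref P i)
    (C : Finset P) (hiC : i ∈ C) :
    pr.deltaPlus C =
      (pr.friends \ C).card +
        ∑ f ∈ pr.friends \ C, Set.ncard {b : P | b ∈ pr.friends ∧ strictOf pr.Rp f b} := by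
  classical
  have hiF := pr.self_not_friend
  -- the Finset of "forced discordant" pairs
  set T : Finset (P × P) :=
    (pr.friends \ C).biUnion (fun f =>
      insert (f, i) ((pr.friends.filter (fun b => strictOf pr.Rp f b)).image (fun b => (f, b))))
    with hT
  have memT : ∀ p : P × P, p ∈ T ↔
      (p.1 ∈ pr.friends ∧ p.1 ∉ C ∧ (p.2 = i ∨ (p.2 ∈ pr.friends ∧ strictOf pr.Rp p.1 p.2))) := by
    intro p
    simp only [hT, Finset.mem_biUnion, Finset.mem_sdiff, Finset.mem_insert, Finset.mem_image,
      Finset.mem_filter, Prod.ext_iff]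
    constructor
    · rintro ⟨f, ⟨hfF, hfC⟩, (⟨h1, h2⟩ | ⟨b, ⟨hbF, hst⟩, h1, h2⟩)⟩
      · refine ⟨by rw [h1]; exact hfF, by rw [h1]; exact hfC, Or.inl h2⟩
      · subst h1; subst h2
        exact ⟨hfF, hfC, Or.inr ⟨hbF, hst⟩⟩
    · rintro ⟨h1, h2, (h3 | ⟨h3, h4⟩)⟩
      · exact ⟨p.1, ⟨h1, h2⟩, Or.inl ⟨rfl, h3⟩⟩
      · exact ⟨p.1, ⟨h1, h2⟩, Or.inr ⟨p.2, ⟨h3, h4⟩, rfl, rfl⟩⟩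
  have hfst : ∀ f : P, ∀ p ∈ (insert (f, i)
      ((pr.friends.filter (fun b => strictOf pr.Rp f b)).image (fun b => (f, b)))), p.1 = f := by
    intro f p hp
    rcases Finset.mem_insert.mp hp with rfl | hp
    · rfl
    · obtain ⟨b, _, rfl⟩ := Finset.mem_image.mp hp
      rfl
  have cardT : T.card = (pr.friends \ C).card +
      ∑ f ∈ pr.friends \ C, (pr.friends.filter (fun b => strictOf pr.Rp f b)).card := by
    rw [hT, Finset.card_biUnion]
    · have hc : ∀ f ∈ pr.friends \ C,
          (insert (f, i) ((pr.friends.filter (fun b => strictOf pr.Rp f b)).image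
            (fun b => (f, b)))).card
          = 1 + (pr.friends.filter (fun b => strictOf pr.Rp f b)).card := by
        intro f _
        rw [Finset.card_insert_of_notMem, Finset.card_image_of_injective, Nat.add_comm]
        · intro a b h
          exact congrArg Prod.snd h
        · intro hmem
          obtain ⟨b, hb, hbe⟩ := Finset.mem_image.mp hmem
          have : b = i := congrArg Prod.snd hbe
          rw [this] at hb
          exact hiF (Finset.mem_filter.mp hb).1
      rw [Finset.sum_congr rfl hc, Finset.sum_add_distrib, Finset.sum_const, smul_eq_mul, mul_one]
    · intro f _ g _ hfg
      refine Finset.disjoint_left.mpr (fun p hp hq => hfg ?_)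
      rw [← hfst f p hp, hfst g p hq]
  -- key step: for every linear extension B of C⁺, the inner infimum is T.card
  have key : ∀ B : P → P → Prop, IsLinExtOn (insert i pr.friends) (pr.coalPlus C) B →
      sInf {m : ℕ | ∃ A : P → P → Prop, IsLinExtOn (insert i pr.friends) pr.prefPlus A ∧
        m = kendallTau (insert i pr.friends) A B} = T.card := by
    intro B hB
    have hDsub : ∀ A : P → P → Prop, IsLinExtOn (insert i pr.friends) pr.prefPlus A →
        (↑T : Set (P × P)) ⊆ {p : P × P | p.1 ∈ insert i pr.friends ∧
          p.2 ∈ insert i pr.friends ∧ A p.1 p.2 ∧ B p.2 p.1} := by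
      intro A hA p hp
      have h := (keyIff pr hB p.1 p.2).mpr ((memT p).mp (Finset.mem_coe.mp hp))
      exact ⟨h.1, h.2.1, hA.extend _ h.1 _ h.2.1 h.2.2.1, h.2.2.2⟩
    have hA0l : IsLinExtOn (insert i pr.friends) pr.prefPlus (refineRel pr.prefPlus B) :=
      refine_isLinExtOn' (prefPlus_wo pr) hB
    have hset : {p : P × P | p.1 ∈ insert i pr.friends ∧ p.2 ∈ insert i pr.friends ∧
        refineRel pr.prefPlus B p.1 p.2 ∧ B p.2 p.1} = ↑T := by
      ext p
      simp only [Set.mem_setOf_eq, Finset.mem_coe]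
      constructor
      · rintro ⟨h1, h2, (hst | ⟨_, _, hBxy⟩), hByx⟩
        · exact (memT p).mpr ((keyIff pr hB p.1 p.2).mp ⟨h1, h2, hst, hByx⟩)
        · exact absurd hByx (fun h => hB.asymm h1 h2 hBxy h)
      · intro hp
        have h := (keyIff pr hB p.1 p.2).mpr ((memT p).mp hp)
        exact ⟨h.1, h.2.1, Or.inl h.2.2.1, h.2.2.2⟩
    have hk0 : kendallTau (insert i pr.friends) (refineRel pr.prefPlus B) B = T.card := by
      rw [kendallTau, hset, Set.ncard_coe_finset]
    apply le_antisymm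
    · exact Nat.sInf_le ⟨refineRel pr.prefPlus B, hA0l, hk0.symm⟩
    · refine le_csInf ⟨kendallTau (insert i pr.friends) (refineRel pr.prefPlus B) B,
        ⟨refineRel pr.prefPlus B, hA0l, rfl⟩⟩ ?_
      rintro m ⟨A, hA, rfl⟩
      have hfin : ({p : P × P | p.1 ∈ insert i pr.friends ∧ p.2 ∈ insert i pr.friends ∧
          A p.1 p.2 ∧ B p.2 p.1}).Finite := by
        apply Set.Finite.subset ((insert i pr.friends) ×ˢ (insert i pr.friends)).finite_toSet
        intro p hp
        exact Finset.mem_coe.mpr (Finset.mem_product.mpr ⟨hp.1, hp.2.1⟩)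
      calc T.card = (↑T : Set (P × P)).ncard := (Set.ncard_coe_finset T).symm
        _ ≤ _ := Set.ncard_le_ncard (hDsub A hA) hfin
  -- existence of a linear extension of C⁺
  have hex : IsLinExtOn (insert i pr.friends) (pr.coalPlus C)
      (refineRel (pr.coalPlus C) WellOrderingRel) := by
    apply refine_isLinExtOn (coalPlus_wo pr C)
    · intro x _
      exact (IsWellFounded.wf : WellFounded (@WellOrderingRel P)).isIrrefl.irrefl x
    · intro x _ y _ z _ h1 h2
      exact IsTrans.trans x y z h1 h2
    · intro x _ y _ hne
      rcases trichotomous_of (@WellOrderingRel P) x y with h | h | h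
      · exact Or.inl h
      · exact absurd h hne
      · exact Or.inr h
  -- outer supremum
  have houter : {n : ℕ | ∃ B : P → P → Prop,
      IsLinExtOn (insert i pr.friends) (pr.coalPlus C) B ∧
      n = sInf {m : ℕ | ∃ A : P → P → Prop, IsLinExtOn (insert i pr.friends) pr.prefPlus A ∧
        m = kendallTau (insert i pr.friends) A B}} = {T.card} := by
    ext n
    simp only [Set.mem_setOf_eq, Set.mem_singleton_iff]
    constructor
    · rintro ⟨B, hB, rfl⟩
      exact key B hB
    · rintro rfl
      exact ⟨_, hex, (key _ hex).symm⟩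
  have hstart : pr.deltaPlus C = sSup {n : ℕ | ∃ B : P → P → Prop,
      IsLinExtOn (insert i pr.friends) (pr.coalPlus C) B ∧
      n = sInf {m : ℕ | ∃ A : P → P → Prop, IsLinExtOn (insert i pr.friends) pr.prefPlus A ∧
        m = kendallTau (insert i pr.friends) A B}} := rfl
  rw [hstart, houter, csSup_singleton, cardT]
  congr 1
  apply Finset.sum_congr rfl
  intro f _
  rw [← Set.ncard_coe_finset]
  congr 1
  ext b
  simp only [Finset.coe_filter, Set.mem_setOf_eq, Set.mem_sep_iff, Finset.mem_coe]
end

section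
/- (Nonimposition) Fix a player i and a finite set N_i ⊆ N∖{i} of known players. For every subset C ⊆ N_i there exists a FEN preference for i with neighbourhood N_i — namely N⁺_i = C with all friends mutually indifferent and N⁻_i = N_i ∖ C with all enemies mutually indifferent — such that C ∪ {i} is a most preferred coalition of i, i.e., δ(⊵_i, C ∪ {i}) ≤ δ(⊵_i, D) for every coalition D containing i. -/

lemma kendallTau_self_eq_zero {P : Type*} (S : Finset P) (R B : P → P → Prop)
    (hB : IsLinExtOn S R B) : kendallTau S B B = 0 := by
  unfold kendallTau
  convert Set.ncard_empty (P × P)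
  ext p
  simp only [Set.mem_setOf_eq, Set.mem_empty_iff_false, iff_false]
  rintro ⟨h1, h2, h3, h4⟩
  exact hB.irrefl p.1 h1 (hB.trans p.1 h1 p.2 h2 p.1 h1 h3 h4)

lemma dirTau_self {P : Type*} (S : Finset P) (R : P → P → Prop) : dirTau S R R = 0 := by
  unfold dirTau
  have hsub : { n : ℕ | ∃ B : P → P → Prop, IsLinExtOn S R B ∧
      n = sInf { m : ℕ | ∃ A : P → P → Prop, IsLinExtOn S R A ∧ m = kendallTau S A B } }
      ⊆ {0} := by
    rintro n ⟨B, hB, rfl⟩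
    have h0 : (0 : ℕ) ∈ { m : ℕ | ∃ A : P → P → Prop, IsLinExtOn S R A ∧
        m = kendallTau S A B } := ⟨B, hB, (kendallTau_self_eq_zero S R B hB).symm⟩
    simp only [Set.mem_singleton_iff]
    exact Nat.sInf_eq_zero.mpr (Or.inl h0)
  rcases Set.subset_singleton_iff_eq.mp hsub with h | h
  · rw [h]; exact csSup_empty
  · rw [h]; exact csSup_singleton 0

lemma coalPlus_eq_prefPlus {P : Type*} {i : P} (pr : FENPref P i) (C' : Finset P)
    (hmem : ∀ z ∈ pr.friends, z ∈ C') : pr.coalPlus C' = pr.prefPlus := by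
  funext x y
  apply propext
  simp only [FENPref.coalPlus, FENPref.prefPlus]
  constructor
  · rintro (⟨h1, _, h3, _, h5⟩ | ⟨⟨h1, _⟩, (rfl | ⟨h3, h4⟩)⟩ | ⟨rfl, (rfl | ⟨h3, h4⟩)⟩ |
      ⟨h1, h2, _⟩)
    · exact Or.inl ⟨h1, h3, h5⟩
    · exact Or.inr (Or.inl ⟨h1, rfl⟩)
    · exact absurd (hmem y h3) h4
    · exact Or.inr (Or.inr ⟨rfl, rfl⟩)
    · exact absurd (hmem y h3) h4
    · exact absurd (hmem x h1) h2
  · rintro (⟨h1, h2, h3⟩ | ⟨h1, rfl⟩ | ⟨rfl, rfl⟩)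
    · exact Or.inl ⟨h1, hmem x h1, h2, hmem y h2, h3⟩
    · exact Or.inr (Or.inl ⟨⟨h1, hmem x h1⟩, Or.inl rfl⟩)
    · exact Or.inr (Or.inr (Or.inl ⟨rfl, Or.inl rfl⟩))

lemma coalMinus_eq_prefMinus {P : Type*} {i : P} (pr : FENPref P i) (C' : Finset P)
    (hmem : ∀ z ∈ pr.enemies, z ∉ C') : pr.coalMinus C' = pr.prefMinus := by
  funext x y
  apply propext
  simp only [FENPref.coalMinus, FENPref.prefMinus]
  constructor
  · rintro (⟨h1, h2, _⟩ | ⟨⟨h1, h2⟩, _⟩ | ⟨rfl, (rfl | ⟨h3, _⟩)⟩ | ⟨h1, _, h3, _, h5⟩)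
    · exact absurd h2 (hmem x h1)
    · exact absurd h2 (hmem x h1)
    · exact Or.inl ⟨rfl, rfl⟩
    · exact Or.inr (Or.inl ⟨rfl, h3⟩)
    · exact Or.inr (Or.inr ⟨h1, h3, h5⟩)
  · rintro (⟨rfl, rfl⟩ | ⟨rfl, h2⟩ | ⟨h1, h2, h3⟩)
    · exact Or.inr (Or.inr (Or.inl ⟨rfl, Or.inl rfl⟩))
    · exact Or.inr (Or.inr (Or.inl ⟨rfl, Or.inr ⟨h2, hmem y h2⟩⟩))
    · exact Or.inr (Or.inr (Or.inr ⟨h1, hmem x h1, h2, hmem y h2, h3⟩))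

lemma delta_min {P : Type*} [DecidableEq P] {i : P} (pr : FENPref P i) (C' : Finset P)
    (hp : pr.coalPlus C' = pr.prefPlus) (hm : pr.coalMinus C' = pr.prefMinus)
    (D : Finset P) : pr.delta C' ≤ pr.delta D := by
  have h0 : pr.delta C' = 0 := by
    unfold FENPref.delta FENPref.deltaPlus FENPref.deltaMinus
    rw [hp, hm, dirTau_self, dirTau_self]
  rw [h0]
  exact Nat.zero_le _

/-- Nonimposition: fix a player `i` and a finite set `Ni ⊆ N ∖ {i}` of known players.
For every subset `C ⊆ Ni` there is a FEN preference for `i` with neighbourhood `Ni`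
— friends `C` (mutually indifferent) and enemies `Ni ∖ C` (mutually indifferent) —
such that `C ∪ {i}` is a most preferred coalition of `i`. -/
theorem nonimposition {P : Type*} [DecidableEq P] (i : P) (Ni : Finset P) (hNi : i ∉ Ni)
    (C : Finset P) (hC : C ⊆ Ni) :
    ∃ pr : FENPref P i,
      pr.friends = C ∧ pr.enemies = Ni \ C ∧
      (∀ x ∈ C, ∀ y ∈ C, pr.Rp x y) ∧
      (∀ x ∈ Ni \ C, ∀ y ∈ Ni \ C, pr.Rm x y) ∧
      ∀ D : Finset P, i ∈ D → pr.delta (insert i C) ≤ pr.delta D := by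
  have hiC : i ∉ C := fun h => hNi (hC h)
  refine ⟨{ friends := C, enemies := Ni \ C,
            Rp := fun x y => x ∈ C ∧ y ∈ C,
            Rm := fun x y => x ∈ Ni \ C ∧ y ∈ Ni \ C,
            disj := Finset.disjoint_sdiff,
            self_not_friend := hiC,
            self_not_enemy := fun h => hNi (Finset.mem_sdiff.mp h).1,
            wo_p := ⟨fun x hx => ⟨hx, hx⟩, fun x hx y hy z hz _ _ => ⟨hx, hz⟩,
                     fun x hx y hy => Or.inl ⟨hx, hy⟩⟩,
            wo_m := ⟨fun x hx => ⟨hx, hx⟩, fun x hx y hy z hz _ _ => ⟨hx, hz⟩,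
                     fun x hx y hy => Or.inl ⟨hx, hy⟩⟩ }, rfl, rfl,
          fun x hx y hy => ⟨hx, hy⟩, fun x hx y hy => ⟨hx, hy⟩, ?_⟩
  intro D hD
  refine delta_min _ _ ?_ ?_ D
  · exact coalPlus_eq_prefPlus _ _ (fun z hz => Finset.mem_insert_of_mem hz)
  · refine coalMinus_eq_prefMinus _ _ ?_
    intro z hz hmemz
    rcases Finset.mem_insert.mp hmemz with rfl | h
    · exact hNi (Finset.mem_sdiff.mp hz).1
    · exact (Finset.mem_sdiff.mp hz).2 h
end

section
/- (Adding a friend improves a coalition) For every player i, every coalition A containing i, and every friend x ∈ N⁺_i ∖ A, it holds that δ(⊵_i, A ∪ {x}) < δ(⊵_i, A); in particular A ∪ {x} ≻_i A. -/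
/-! Auxiliary machinery for computing `dirTau`. -/

section Aux

variable {P : Type*}

/-- A strict total order on `S` (as a bundle of properties). -/
structure IsSTO (S : Finset P) (B : P → P → Prop) : Prop where
  irrefl : ∀ x ∈ S, ¬ B x x
  trans : ∀ x ∈ S, ∀ y ∈ S, ∀ z ∈ S, B x y → B y z → B x z
  total : ∀ x ∈ S, ∀ y ∈ S, x ≠ y → B x y ∨ B y x

lemma IsLinExtOn.toSTO {S : Finset P} {R B : P → P → Prop} (h : IsLinExtOn S R B) :
    IsSTO S B := ⟨h.irrefl, h.trans, h.total⟩

lemma wellOrderingRel_sto (S : Finset P) : IsSTO S (fun a b => WellOrderingRel a b) := by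
  haveI := (WellOrderingRel.isWellOrder (α := P))
  refine ⟨fun x _ h => ?_, fun x _ y _ z _ hxy hyz => ?_, fun x _ y _ hne => ?_⟩
  · exact irrefl_of WellOrderingRel x h
  · exact trans_of WellOrderingRel hxy hyz
  · rcases trichotomous_of WellOrderingRel x y with h | h | h
    · exact Or.inl h
    · exact absurd h hne
    · exact Or.inr h

/-- Refine a weak order `R` by breaking ties with a strict total order `B`. -/
def linExtend (R B : P → P → Prop) (x y : P) : Prop :=
  strictOf R x y ∨ (indiffOf R x y ∧ B x y)

lemma linExtend_isLinExt {S : Finset P} {R B : P → P → Prop}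
    (hR : IsWeakOrderOn S R) (hB : IsSTO S B) : IsLinExtOn S R (linExtend R B) := by
  constructor
  · intro x hx h
    rcases h with ⟨h1, h2⟩ | ⟨_, h2⟩
    · exact h2 h1
    · exact hB.irrefl x hx h2
  · intro x hx y hy z hz hxy hyz
    rcases hxy with ⟨h1, h2⟩ | ⟨⟨h1, h1'⟩, h2⟩ <;>
      rcases hyz with ⟨g1, g2⟩ | ⟨⟨g1, g1'⟩, g2⟩
    · exact Or.inl ⟨hR.trans x hx y hy z hz h1 g1,
        fun h => h2 (hR.trans y hy z hz x hx g1 h)⟩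
    · exact Or.inl ⟨hR.trans x hx y hy z hz h1 g1,
        fun h => h2 (hR.trans y hy z hz x hx g1 h)⟩
    · exact Or.inl ⟨hR.trans x hx y hy z hz h1 g1,
        fun h => g2 (hR.trans z hz x hx y hy h h1)⟩
    · exact Or.inr ⟨⟨hR.trans x hx y hy z hz h1 g1,
        hR.trans z hz y hy x hx g1' h1'⟩, hB.trans x hx y hy z hz h2 g2⟩
  · intro x hx y hy hne
    rcases hR.total x hx y hy with h | h
    · by_cases h' : R y x
      · rcases hB.total x hx y hy hne with b | b
        · exact Or.inl (Or.inr ⟨⟨h, h'⟩, b⟩)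
        · exact Or.inr (Or.inr ⟨⟨h', h⟩, b⟩)
      · exact Or.inl (Or.inl ⟨h, h'⟩)
    · by_cases h' : R x y
      · rcases hB.total x hx y hy hne with b | b
        · exact Or.inl (Or.inr ⟨⟨h', h⟩, b⟩)
        · exact Or.inr (Or.inr ⟨⟨h, h'⟩, b⟩)
      · exact Or.inr (Or.inl ⟨h, h'⟩)
  · intro x _ y _ h
    exact Or.inl h

/-- The set of pairs forced to be inverted between `R1` and `R2`. -/
def forcedSet (S : Finset P) (R1 R2 : P → P → Prop) : Set (P × P) :=
  {p | p.1 ∈ S ∧ p.2 ∈ S ∧ strictOf R1 p.1 p.2 ∧ strictOf R2 p.2 p.1}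

lemma forcedSet_finite (S : Finset P) (R1 R2 : P → P → Prop) :
    (forcedSet S R1 R2).Finite :=
  Set.Finite.subset (Set.Finite.prod S.finite_toSet S.finite_toSet)
    (fun p hp => ⟨hp.1, hp.2.1⟩)

lemma kendallSet_finite (S : Finset P) (A B : P → P → Prop) :
    ({p : P × P | p.1 ∈ S ∧ p.2 ∈ S ∧ A p.1 p.2 ∧ B p.2 p.1}).Finite :=
  Set.Finite.subset (Set.Finite.prod S.finite_toSet S.finite_toSet)
    (fun p hp => ⟨hp.1, hp.2.1⟩)

lemma forced_le_kendall {S : Finset P} {R1 R2 A B : P → P → Prop}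
    (LA : IsLinExtOn S R1 A) (LB : IsLinExtOn S R2 B) :
    (forcedSet S R1 R2).ncard ≤ kendallTau S A B := by
  apply Set.ncard_le_ncard _ (kendallSet_finite S A B)
  rintro ⟨a, b⟩ ⟨h1, h2, s1, s2⟩
  exact ⟨h1, h2, LA.extend a h1 b h2 s1, LB.extend b h2 a h1 s2⟩

lemma opt_kendall {S : Finset P} {R1 R2 B : P → P → Prop}
    (hR1 : IsWeakOrderOn S R1) (hR2 : IsWeakOrderOn S R2)
    (hties : ∀ x ∈ S, ∀ y ∈ S, indiffOf R2 x y → indiffOf R1 x y)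
    (LB : IsLinExtOn S R2 B) :
    kendallTau S (linExtend R1 B) B = (forcedSet S R1 R2).ncard := by
  have hA : IsLinExtOn S R1 (linExtend R1 B) := linExtend_isLinExt hR1 LB.toSTO
  unfold kendallTau
  congr 1
  apply Set.Subset.antisymm
  · rintro ⟨a, b⟩ ⟨h1, h2, hab, hba⟩
    have hne : a ≠ b := by
      rintro rfl
      exact LB.irrefl a h1 hba
    -- from `linExtend R1 B a b` and `B b a`, the tie-break case is impossible
    have s1 : strictOf R1 a b := by
      rcases hab with h | ⟨_, hb⟩
      · exact h
      · exact absurd (LB.trans a h1 b h2 a h1 hb hba) (LB.irrefl a h1)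
    refine ⟨h1, h2, s1, ?_⟩
    rcases hR2.total a h1 b h2 with h | h
    · by_cases h' : R2 b a
      · exact absurd (hties a h1 b h2 ⟨h, h'⟩).2 s1.2
      · exact absurd (LB.extend a h1 b h2 ⟨h, h'⟩)
          (fun hb => LB.irrefl a h1 (LB.trans a h1 b h2 a h1 hb hba))
    · refine ⟨h, fun h' => ?_⟩
      exact absurd (hties a h1 b h2 ⟨h', h⟩).2 s1.2
  · rintro ⟨a, b⟩ ⟨h1, h2, s1, s2⟩
    exact ⟨h1, h2, hA.extend a h1 b h2 s1, LB.extend b h2 a h1 s2⟩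

/-- The key computation: if every tie of `R2` (on distinct elements) is a tie of `R1`,
then the directed Hausdorff–Kendall-tau distance is the number of forced inversions. -/
lemma dirTau_eq_forced {S : Finset P} {R1 R2 : P → P → Prop}
    (hR1 : IsWeakOrderOn S R1) (hR2 : IsWeakOrderOn S R2)
    (hties : ∀ x ∈ S, ∀ y ∈ S, indiffOf R2 x y → indiffOf R1 x y) :
    dirTau S R1 R2 = (forcedSet S R1 R2).ncard := by
  set F := (forcedSet S R1 R2).ncard with hF
  have hB0 : IsLinExtOn S R2
      (linExtend R2 (fun a b => WellOrderingRel a b)) :=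
    linExtend_isLinExt hR2 (wellOrderingRel_sto S)
  have key : ∀ B : P → P → Prop, IsLinExtOn S R2 B →
      sInf { m : ℕ | ∃ A : P → P → Prop, IsLinExtOn S R1 A ∧ m = kendallTau S A B } = F := by
    intro B LB
    have hmem : F ∈ { m : ℕ | ∃ A : P → P → Prop, IsLinExtOn S R1 A ∧ m = kendallTau S A B } :=
      ⟨linExtend R1 B, linExtend_isLinExt hR1 LB.toSTO,
        (opt_kendall hR1 hR2 hties LB).symm⟩
    apply le_antisymm (Nat.sInf_le hmem)
    apply le_csInf ⟨F, hmem⟩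
    rintro m ⟨A, LA, rfl⟩
    exact forced_le_kendall LA LB
  unfold dirTau
  apply le_antisymm
  · refine csSup_le ⟨F, ⟨_, hB0, (key _ hB0).symm⟩⟩ ?_
    rintro n ⟨B, LB, rfl⟩
    exact le_of_eq (key B LB)
  · refine le_csSup ⟨F, ?_⟩ ⟨_, hB0, (key _ hB0).symm⟩
    rintro n ⟨B, LB, rfl⟩
    exact le_of_eq (key B LB)

end Aux

/-! Properties of `prefPlus` and `coalPlus`. -/

section PrefProps

variable {P : Type*} [DecidableEq P] {i : P} (pr : FENPref P i)

lemma coalPlus_ties (C : Finset P) :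
    ∀ x ∈ insert i pr.friends, ∀ y ∈ insert i pr.friends,
      indiffOf (pr.coalPlus C) x y → indiffOf pr.prefPlus x y := by
  have hif := pr.self_not_friend
  intro a _ b _ ⟨hab, hba⟩
  rcases hab with ⟨ha, hac, hb, hbc, hR⟩ | ⟨⟨ha, hac⟩, hb⟩ | ⟨rfl, hb⟩ |
      ⟨ha, hac, hb, hbc, hR⟩
  · -- both in C: `hba` must give `Rp b a`
    rcases hba with ⟨_, _, _, _, hR'⟩ | ⟨⟨_, _⟩, h⟩ | ⟨hbi, h⟩ | ⟨_, hn, _, _, _⟩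
    · exact ⟨Or.inl ⟨ha, hb, hR⟩, Or.inl ⟨hb, ha, hR'⟩⟩
    · rcases h with rfl | ⟨_, hn⟩
      · exact absurd ha hif
      · exact absurd hac hn
    · exact absurd (hbi ▸ hb) hif
    · exact absurd hbc hn
  · -- a in C, b = i or not in C : `hba` impossible
    exfalso
    rcases hba with ⟨hb', hbc', _, _, _⟩ | ⟨⟨hb', hbc'⟩, h⟩ | ⟨hbi, h⟩ | ⟨_, _, _, hn, _⟩
    · rcases hb with rfl | ⟨_, hn⟩
      · exact hif hb'
      · exact hn hbc'
    · rcases h with rfl | ⟨_, hn⟩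
      · exact hif ha
      · exact hn hac
    · rcases h with h | ⟨_, hn⟩
      · exact hif (h ▸ ha)
      · exact hn hac
    · exact hn hac
  · -- a = i
    rcases hb with rfl | ⟨hb', hbn⟩
    · exact ⟨Or.inr (Or.inr ⟨rfl, rfl⟩), Or.inr (Or.inr ⟨rfl, rfl⟩)⟩
    · exfalso
      rcases hba with ⟨_, _, hi, _, _⟩ | ⟨⟨_, hbc'⟩, _⟩ | ⟨hbi, _⟩ | ⟨_, _, hi, _, _⟩
      · exact hif hi
      · exact hbn hbc'
      · exact hif (hbi ▸ hb')
      · exact hif hi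
  · -- both not in C
    rcases hba with ⟨_, hn, _, _, _⟩ | ⟨⟨_, hn⟩, _⟩ | ⟨hbi, _⟩ | ⟨_, _, _, _, hR'⟩
    · exact absurd hn hbc
    · exact absurd hn hbc
    · exact absurd (hbi ▸ hb) hif
    · exact ⟨Or.inl ⟨ha, hb, hR'⟩, Or.inl ⟨hb, ha, hR⟩⟩

end PrefProps

/-- Adding a friend improves a coalition: for every player `i`, coalition `A ∋ i`,
and friend `x ∈ N⁺_i ∖ A`, we have `δ(⊵_i, A ∪ {x}) < δ(⊵_i, A)`,
i.e. `A ∪ {x} ≻_i A`. -/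
theorem adding_friend_improves {P : Type*} [DecidableEq P] {i : P} (pr : FENPref P i)
    (A : Finset P) (hiA : i ∈ A) (x : P) (hx : x ∈ pr.friends) (hxA : x ∉ A) :
    pr.delta (insert x A) < pr.delta A := by
  classical
  have hif := pr.self_not_friend
  have hxi : x ≠ i := fun h => hif (h ▸ hx)
  -- the minus part is unchanged
  have hminus : pr.coalMinus (insert x A) = pr.coalMinus A := by
    have hxe : x ∉ pr.enemies := Finset.disjoint_left.mp pr.disj hx
    funext a b
    have hme : ∀ c, c ∈ pr.enemies → (c ∈ insert x A ↔ c ∈ A) := by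
      intro c hc
      rw [Finset.mem_insert]
      exact ⟨fun h' => h'.resolve_left (fun e => hxe (e ▸ hc)), Or.inr⟩
    have ha' := hme a
    have hb' := hme b
    apply propext
    unfold FENPref.coalMinus
    constructor
    · rintro (⟨h1, h2, h3, h4, h5⟩ | ⟨⟨h1, h2⟩, h3⟩ | ⟨h1, h2⟩ | ⟨h1, h2, h3, h4, h5⟩)
      · exact Or.inl ⟨h1, (ha' h1).mp h2, h3, (hb' h3).mp h4, h5⟩
      · refine Or.inr (Or.inl ⟨⟨h1, (ha' h1).mp h2⟩, ?_⟩)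
        rcases h3 with h | ⟨h3, h4⟩
        · exact Or.inl h
        · exact Or.inr ⟨h3, fun h => h4 ((hb' h3).mpr h)⟩
      · refine Or.inr (Or.inr (Or.inl ⟨h1, ?_⟩))
        rcases h2 with h | ⟨h3, h4⟩
        · exact Or.inl h
        · exact Or.inr ⟨h3, fun h => h4 ((hb' h3).mpr h)⟩
      · exact Or.inr (Or.inr (Or.inr ⟨h1, fun h => h2 ((ha' h1).mpr h), h3,
          fun h => h4 ((hb' h3).mpr h), h5⟩))
    · rintro (⟨h1, h2, h3, h4, h5⟩ | ⟨⟨h1, h2⟩, h3⟩ | ⟨h1, h2⟩ | ⟨h1, h2, h3, h4, h5⟩)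
      · exact Or.inl ⟨h1, (ha' h1).mpr h2, h3, (hb' h3).mpr h4, h5⟩
      · refine Or.inr (Or.inl ⟨⟨h1, (ha' h1).mpr h2⟩, ?_⟩)
        rcases h3 with h | ⟨h3, h4⟩
        · exact Or.inl h
        · exact Or.inr ⟨h3, fun h => h4 ((hb' h3).mp h)⟩
      · refine Or.inr (Or.inr (Or.inl ⟨h1, ?_⟩))
        rcases h2 with h | ⟨h3, h4⟩
        · exact Or.inl h
        · exact Or.inr ⟨h3, fun h => h4 ((hb' h3).mp h)⟩
      · exact Or.inr (Or.inr (Or.inr ⟨h1, fun h => h2 ((ha' h1).mp h), h3,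
          fun h => h4 ((hb' h3).mp h), h5⟩))
  have hdm : pr.deltaMinus (insert x A) = pr.deltaMinus A := by
    unfold FENPref.deltaMinus
    rw [hminus]
  have hdp : pr.deltaPlus (insert x A) < pr.deltaPlus A := by
    unfold FENPref.deltaPlus
    rw [dirTau_eq_forced (prefPlus_wo pr) (coalPlus_wo pr _) (coalPlus_ties pr _),
        dirTau_eq_forced (prefPlus_wo pr) (coalPlus_wo pr _) (coalPlus_ties pr _)]
    apply Set.ncard_lt_ncard _ (forcedSet_finite _ _ _)
    constructor
    · -- forced set for `insert x A` is contained in the one for `A`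
      rintro ⟨a, b⟩ hp
      simp only [forcedSet, Set.mem_setOf_eq] at hp ⊢
      obtain ⟨h1, h2, s1, s2⟩ := hp
      refine ⟨h1, h2, s1, ?_⟩
      obtain ⟨p1, p2⟩ := s1
      obtain ⟨c1, c2⟩ := s2
      rcases p1 with ⟨ha, hb, hR⟩ | ⟨ha, rfl⟩ | ⟨rfl, rfl⟩
      · -- a, b friends with Rp a b
        have hnRba : ¬ pr.Rp b a := fun h => p2 (Or.inl ⟨hb, ha, h⟩)
        rcases c1 with ⟨_, _, _, _, hR'⟩ | ⟨⟨_, hbC⟩, hcond⟩ | ⟨hbi, _⟩ |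
            ⟨_, hbC, _, haC, _⟩
        · exact absurd hR' hnRba
        · rcases hcond with rfl | ⟨_, haC⟩
          · exact absurd ha hif
          · have haA : a ∉ A := fun h => haC (Finset.mem_insert_of_mem h)
            have hnab : ¬ pr.coalPlus A a b := by
              rintro (⟨_, h2', _, _, _⟩ | ⟨⟨_, h2'⟩, _⟩ | ⟨rfl, _⟩ | ⟨_, _, _, _, h5'⟩)
              · exact haA h2'
              · exact haA h2'
              · exact hif ha
              · exact hnRba h5'
            rcases Finset.mem_insert.mp hbC with rfl | hbA
            · exact ⟨Or.inr (Or.inr (Or.inr ⟨hb, hxA, ha, haA, hR⟩)), hnab⟩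
            · exact ⟨Or.inr (Or.inl ⟨⟨hb, hbA⟩, Or.inr ⟨ha, haA⟩⟩), hnab⟩
        · exact absurd (hbi ▸ hb) hif
        · have haA : a ∉ A := fun h => haC (Finset.mem_insert_of_mem h)
          have hbA : b ∉ A := fun h => hbC (Finset.mem_insert_of_mem h)
          refine ⟨Or.inr (Or.inr (Or.inr ⟨hb, hbA, ha, haA, hR⟩)), ?_⟩
          rintro (⟨_, h2', _, _, _⟩ | ⟨⟨_, h2'⟩, _⟩ | ⟨rfl, _⟩ | ⟨_, _, _, _, h5'⟩)
          · exact haA h2'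
          · exact haA h2'
          · exact hif ha
          · exact hnRba h5'
      · -- b = i, a a friend
        rcases c1 with ⟨h1', _, _, _, _⟩ | ⟨⟨h1', _⟩, _⟩ | ⟨_, hcond⟩ |
            ⟨h1', _, _, _, _⟩
        · exact absurd h1' hif
        · exact absurd h1' hif
        · rcases hcond with rfl | ⟨_, haC⟩
          · exact absurd (Or.inr (Or.inr ⟨rfl, rfl⟩)) p2
          · have haA : a ∉ A := fun h => haC (Finset.mem_insert_of_mem h)
            refine ⟨Or.inr (Or.inr (Or.inl ⟨rfl, Or.inr ⟨ha, haA⟩⟩)), ?_⟩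
            rintro (⟨_, _, h3', _, _⟩ | ⟨⟨_, h2'⟩, _⟩ | ⟨rfl, _⟩ | ⟨_, _, h3', _, _⟩)
            · exact hif h3'
            · exact haA h2'
            · exact hif ha
            · exact hif h3'
        · exact absurd h1' hif
      · exact absurd (Or.inr (Or.inr ⟨rfl, rfl⟩)) p2
    · -- the pair `(x, i)` is forced for `A` but not for `insert x A`
      intro hsub
      have hmem : ((x, i) : P × P) ∈
          forcedSet (insert i pr.friends) pr.prefPlus (pr.coalPlus A) := by
        simp only [forcedSet, Set.mem_setOf_eq]
        refine ⟨Finset.mem_insert_of_mem hx, Finset.mem_insert_self i _, ⟨?_, ?_⟩, ⟨?_, ?_⟩⟩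
        · exact Or.inr (Or.inl ⟨hx, rfl⟩)
        · rintro (⟨h1', _, _⟩ | ⟨h1', _⟩ | ⟨_, h2'⟩)
          · exact hif h1'
          · exact hif h1'
          · exact hxi h2'
        · exact Or.inr (Or.inr (Or.inl ⟨rfl, Or.inr ⟨hx, hxA⟩⟩))
        · rintro (⟨_, _, h3', _, _⟩ | ⟨⟨_, h2'⟩, _⟩ | ⟨h1', _⟩ | ⟨_, _, h3', _, _⟩)
          · exact hif h3'
          · exact hxA h2'
          · exact hxi h1'
          · exact hif h3'
      obtain ⟨_, _, _, s2⟩ := hsub hmem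
      exact s2.2 (Or.inr (Or.inl ⟨⟨hx, Finset.mem_insert_self x A⟩, Or.inl rfl⟩))
  have : pr.deltaPlus (insert x A) + pr.deltaMinus (insert x A)
      < pr.deltaPlus A + pr.deltaMinus A := by
    rw [hdm]
    exact Nat.add_lt_add_right hdp _
  exact this
end

section
/- Let i be a player and let A, B be coalitions containing i. If there exists an injective function ψ : A ∩ N⁻_i → B ∩ N⁻_i with k ⊵_i ψ(k) for every k ∈ A ∩ N⁻_i, then δ⁻(⊵_i, A) ≤ δ⁻(⊵_i, B). -/
/-! Auxiliary development for the monotonicity theorem. -/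

section AuxDev

variable {P : Type*} [DecidableEq P]

/-- Asymmetry of a linear extension on `S`. -/
theorem IsLinExtOn.asym {S : Finset P} {R A : P → P → Prop} (h : IsLinExtOn S R A)
    {x y : P} (hx : x ∈ S) (hy : y ∈ S) (hxy : A x y) : ¬ A y x := fun hyx =>
  h.irrefl x hx (h.trans x hx y hy x hx hxy hyx)

/-- Refining a total, transitive relation `R` by a strict linear order `L` (on `S`)
gives a linear extension of `R` on `S`. -/
theorem refine_linext {S : Finset P} {R L : P → P → Prop}
    (hRt : ∀ x ∈ S, ∀ y ∈ S, ∀ z ∈ S, R x y → R y z → R x z)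
    (hRtot : ∀ x ∈ S, ∀ y ∈ S, R x y ∨ R y x)
    (hLi : ∀ x ∈ S, ¬ L x x)
    (hLt : ∀ x ∈ S, ∀ y ∈ S, ∀ z ∈ S, L x y → L y z → L x z)
    (hLtot : ∀ x ∈ S, ∀ y ∈ S, x ≠ y → L x y ∨ L y x) :
    IsLinExtOn S R (fun x y => strictOf R x y ∨ (indiffOf R x y ∧ L x y)) where
  irrefl x hx h := by
    rcases h with ⟨h1, h2⟩ | ⟨_, h2⟩
    · exact h2 h1
    · exact hLi x hx h2
  trans x hx y hy z hz hxy hyz := by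
    rcases hxy with ⟨h1, h2⟩ | ⟨⟨h1, h1'⟩, h2⟩ <;> rcases hyz with ⟨g1, g2⟩ | ⟨⟨g1, g1'⟩, g2⟩
    · exact Or.inl ⟨hRt x hx y hy z hz h1 g1, fun hzx => g2 (hRt z hz x hx y hy hzx h1)⟩
    · exact Or.inl ⟨hRt x hx y hy z hz h1 g1, fun hzx => h2 (hRt y hy z hz x hx g1 hzx)⟩
    · exact Or.inl ⟨hRt x hx y hy z hz h1 g1, fun hzx => g2 (hRt z hz x hx y hy hzx h1)⟩
    · exact Or.inr ⟨⟨hRt x hx y hy z hz h1 g1, hRt z hz y hy x hx g1' h1'⟩,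
        hLt x hx y hy z hz h2 g2⟩
  total x hx y hy hne := by
    rcases hRtot x hx y hy with h | h
    · by_cases h' : R y x
      · rcases hLtot x hx y hy hne with l | l
        · exact Or.inl (Or.inr ⟨⟨h, h'⟩, l⟩)
        · exact Or.inr (Or.inr ⟨⟨h', h⟩, l⟩)
      · exact Or.inl (Or.inl ⟨h, h'⟩)
    · by_cases h' : R x y
      · rcases hLtot x hx y hy hne with l | l
        · exact Or.inl (Or.inr ⟨⟨h', h⟩, l⟩)
        · exact Or.inr (Or.inr ⟨⟨h, h'⟩, l⟩)
      · exact Or.inr (Or.inl ⟨h, h'⟩)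
  extend x _ y _ h := Or.inl h

/-- Any total transitive relation on `S` has a linear extension on `S`. -/
theorem exists_linext {S : Finset P} {R : P → P → Prop}
    (hRt : ∀ x ∈ S, ∀ y ∈ S, ∀ z ∈ S, R x y → R y z → R x z)
    (hRtot : ∀ x ∈ S, ∀ y ∈ S, R x y ∨ R y x) :
    ∃ A : P → P → Prop, IsLinExtOn S R A := by
  refine ⟨_, refine_linext (L := WellOrderingRel) hRt hRtot
    (fun x _ => irrefl x) (fun x _ y _ z _ h h' => _root_.trans h h')
    (fun x _ y _ hne => ?_)⟩
  rcases trichotomous_of WellOrderingRel x y with h | h | h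
  · exact Or.inl h
  · exact absurd h hne
  · exact Or.inr h

variable {i : P} (pr : FENPref P i)

theorem prefMinus_trans :
    ∀ x ∈ insert i pr.enemies, ∀ y ∈ insert i pr.enemies, ∀ z ∈ insert i pr.enemies,
      pr.prefMinus x y → pr.prefMinus y z → pr.prefMinus x z := by
  intro x _ y _ z _ hxy hyz
  have hie := pr.self_not_enemy
  rcases hxy with ⟨h1, h2⟩ | ⟨h1, h2⟩ | ⟨h1, h2, h3⟩
  · subst h1; subst h2
    exact hyz
  · subst h1
    rcases hyz with ⟨g1, _⟩ | ⟨g1, _⟩ | ⟨g1, g2, g3⟩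
    · exact absurd (g1 ▸ h2) hie
    · exact absurd (g1 ▸ h2) hie
    · exact Or.inr (Or.inl ⟨rfl, g2⟩)
  · rcases hyz with ⟨g1, _⟩ | ⟨g1, _⟩ | ⟨g1, g2, g3⟩
    · exact absurd (g1 ▸ h2) hie
    · exact absurd (g1 ▸ h2) hie
    · exact Or.inr (Or.inr ⟨h1, g2, pr.wo_m.trans x h1 y h2 z g2 h3 g3⟩)

theorem prefMinus_total :
    ∀ x ∈ insert i pr.enemies, ∀ y ∈ insert i pr.enemies,
      pr.prefMinus x y ∨ pr.prefMinus y x := by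
  intro x hx y hy
  rcases Finset.mem_insert.1 hx with hx | hx <;> rcases Finset.mem_insert.1 hy with hy | hy
  · exact Or.inl (Or.inl ⟨hx, hy⟩)
  · exact Or.inl (Or.inr (Or.inl ⟨hx, hy⟩))
  · exact Or.inr (Or.inr (Or.inl ⟨hy, hx⟩))
  · rcases pr.wo_m.total x hx y hy with h | h
    · exact Or.inl (Or.inr (Or.inr ⟨hx, hy, h⟩))
    · exact Or.inr (Or.inr (Or.inr ⟨hy, hx, h⟩))

variable (C : Finset P)

/-- A convenient "level" description of `coalMinus`. -/
theorem coalMinus_trans :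
    ∀ x ∈ insert i pr.enemies, ∀ y ∈ insert i pr.enemies, ∀ z ∈ insert i pr.enemies,
      pr.coalMinus C x y → pr.coalMinus C y z → pr.coalMinus C x z := by
  intro x _ y _ z _ hxy hyz
  have hie := pr.self_not_enemy
  unfold FENPref.coalMinus at *
  rcases hxy with ⟨hxE, hxC, hyE, hyC, hxy⟩ | ⟨⟨hxE, hxC⟩, hy⟩ | ⟨hx, hy⟩ |
      ⟨hxE, hxC, hyE, hyC, hxy⟩
  · -- x, y enemies in C
    rcases hyz with ⟨_, _, hzE, hzC, hyz⟩ | ⟨_, hz⟩ | ⟨hy', _⟩ | ⟨_, hyC', _, _, _⟩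
    · exact Or.inl ⟨hxE, hxC, hzE, hzC, pr.wo_m.trans z hzE y hyE x hxE hyz hxy⟩
    · exact Or.inr (Or.inl ⟨⟨hxE, hxC⟩, hz⟩)
    · exact absurd (hy' ▸ hyE) hie
    · exact absurd hyC' (not_not_intro hyC)
  · -- x enemy in C, y is i or enemy not in C
    rcases hy with hy | ⟨hyE, hyC⟩
    · subst hy
      rcases hyz with ⟨hyE, _, _, _, _⟩ | ⟨⟨hyE, _⟩, _⟩ | ⟨_, hz⟩ | ⟨hyE, _, _, _, _⟩
      · exact absurd hyE hie
      · exact absurd hyE hie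
      · exact Or.inr (Or.inl ⟨⟨hxE, hxC⟩, hz⟩)
      · exact absurd hyE hie
    · rcases hyz with ⟨_, hyC', _, _, _⟩ | ⟨⟨_, hyC'⟩, _⟩ | ⟨hy', _⟩ | ⟨_, _, hzE, hzC, _⟩
      · exact absurd hyC' hyC
      · exact absurd hyC' hyC
      · exact absurd (hy' ▸ hyE) hie
      · exact Or.inr (Or.inl ⟨⟨hxE, hxC⟩, Or.inr ⟨hzE, hzC⟩⟩)
  · -- x = i
    subst hx
    rcases hy with hy | ⟨hyE, hyC⟩
    · subst hy; exact hyz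
    · rcases hyz with ⟨_, hyC', _, _, _⟩ | ⟨⟨_, hyC'⟩, _⟩ | ⟨hy', _⟩ | ⟨_, _, hzE, hzC, _⟩
      · exact absurd hyC' hyC
      · exact absurd hyC' hyC
      · exact absurd (hy' ▸ hyE) hie
      · exact Or.inr (Or.inr (Or.inl ⟨rfl, Or.inr ⟨hzE, hzC⟩⟩))
  · -- x, y enemies not in C
    rcases hyz with ⟨_, hyC', _, _, _⟩ | ⟨⟨_, hyC'⟩, _⟩ | ⟨hy', _⟩ | ⟨_, _, hzE, hzC, hyz⟩
    · exact absurd hyC' hyC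
    · exact absurd hyC' hyC
    · exact absurd (hy' ▸ hyE) hie
    · exact Or.inr (Or.inr (Or.inr ⟨hxE, hxC, hzE, hzC,
        pr.wo_m.trans x hxE y hyE z hzE hxy hyz⟩))

theorem coalMinus_total :
    ∀ x ∈ insert i pr.enemies, ∀ y ∈ insert i pr.enemies,
      pr.coalMinus C x y ∨ pr.coalMinus C y x := by
  intro x hx y hy
  unfold FENPref.coalMinus
  rcases Finset.mem_insert.1 hx with hx | hx <;> rcases Finset.mem_insert.1 hy with hy | hy
  · subst hx; subst hy; exact Or.inl (Or.inr (Or.inr (Or.inl ⟨rfl, Or.inl rfl⟩)))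
  · subst hx
    by_cases hyC : y ∈ C
    · exact Or.inr (Or.inr (Or.inl ⟨⟨hy, hyC⟩, Or.inl rfl⟩))
    · exact Or.inl (Or.inr (Or.inr (Or.inl ⟨rfl, Or.inr ⟨hy, hyC⟩⟩)))
  · subst hy
    by_cases hxC : x ∈ C
    · exact Or.inl (Or.inr (Or.inl ⟨⟨hx, hxC⟩, Or.inl rfl⟩))
    · exact Or.inr (Or.inr (Or.inr (Or.inl ⟨rfl, Or.inr ⟨hx, hxC⟩⟩)))
  · by_cases hxC : x ∈ C <;> by_cases hyC : y ∈ C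
    · rcases pr.wo_m.total x hx y hy with h | h
      · exact Or.inr (Or.inl ⟨hy, hyC, hx, hxC, h⟩)
      · exact Or.inl (Or.inl ⟨hx, hxC, hy, hyC, h⟩)
    · exact Or.inl (Or.inr (Or.inl ⟨⟨hx, hxC⟩, Or.inr ⟨hy, hyC⟩⟩))
    · exact Or.inr (Or.inr (Or.inl ⟨⟨hy, hyC⟩, Or.inr ⟨hx, hxC⟩⟩))
    · rcases pr.wo_m.total x hx y hy with h | h
      · exact Or.inl (Or.inr (Or.inr (Or.inr ⟨hx, hxC, hy, hyC, h⟩)))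
      · exact Or.inr (Or.inr (Or.inr (Or.inr ⟨hy, hyC, hx, hxC, h⟩)))

/-- Characterization of the strict part of `prefMinus`. -/
theorem strict_prefMinus_iff {x y : P} :
    strictOf pr.prefMinus x y ↔
      (x = i ∧ y ∈ pr.enemies) ∨ (x ∈ pr.enemies ∧ y ∈ pr.enemies ∧ strictOf pr.Rm x y) := by
  have hie := pr.self_not_enemy
  constructor
  · rintro ⟨h1, h2⟩
    rcases h1 with ⟨hx, hy⟩ | ⟨hx, hy⟩ | ⟨hx, hy, h⟩
    · exact absurd (Or.inl ⟨hy, hx⟩) h2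
    · exact Or.inl ⟨hx, hy⟩
    · refine Or.inr ⟨hx, hy, h, fun hyx => h2 ?_⟩
      exact Or.inr (Or.inr ⟨hy, hx, hyx⟩)
  · rintro (⟨hx, hy⟩ | ⟨hx, hy, h, h'⟩)
    · subst hx
      refine ⟨Or.inr (Or.inl ⟨rfl, hy⟩), ?_⟩
      rintro (⟨hy', _⟩ | ⟨hy', _⟩ | ⟨_, hi, _⟩)
      · exact hie (hy' ▸ hy)
      · exact hie (hy' ▸ hy)
      · exact hie hi
    · refine ⟨Or.inr (Or.inr ⟨hx, hy, h⟩), ?_⟩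
      rintro (⟨hy', _⟩ | ⟨hy', _⟩ | ⟨_, _, hyx⟩)
      · exact hie (hy' ▸ hy)
      · exact hie (hy' ▸ hy)
      · exact h' hyx

theorem strict_coalMinus_enemy_in {e : P} (he : e ∈ pr.enemies) (heC : e ∈ C) :
    strictOf (pr.coalMinus C) e i := by
  have hie := pr.self_not_enemy
  have hne : e ≠ i := fun h => hie (h ▸ he)
  have hne' : i ≠ e := fun h => hie (h ▸ he)
  simp only [strictOf, FENPref.coalMinus]
  tauto

theorem strict_coalMinus_enemy_out {e : P} (he : e ∈ pr.enemies) (heC : e ∉ C) :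
    strictOf (pr.coalMinus C) i e := by
  have hie := pr.self_not_enemy
  have hne : e ≠ i := fun h => hie (h ▸ he)
  have hne' : i ≠ e := fun h => hie (h ▸ he)
  simp only [strictOf, FENPref.coalMinus]
  tauto

theorem strict_coalMinus_rev {e e' : P} (he : e ∈ pr.enemies) (he' : e' ∈ pr.enemies)
    (h : strictOf pr.Rm e e') (he'C : e' ∈ C) :
    strictOf (pr.coalMinus C) e' e := by
  have hie := pr.self_not_enemy
  have hne : e ≠ i := fun hh => hie (hh ▸ he)
  have hne' : e' ≠ i := fun hh => hie (hh ▸ he')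
  have hni : i ≠ e := fun hh => hie (hh ▸ he)
  have hni' : i ≠ e' := fun hh => hie (hh ▸ he')
  obtain ⟨h1, h2⟩ := h
  by_cases heC : e ∈ C <;>
  · simp only [strictOf, FENPref.coalMinus]
    tauto

theorem strict_coalMinus_fwd {e e' : P} (he : e ∈ pr.enemies) (he' : e' ∈ pr.enemies)
    (h : strictOf pr.Rm e e') (he'C : e' ∉ C) (heC : e ∈ C ∨ e ∉ C) :
    strictOf (pr.coalMinus C) e e' := by
  have hie := pr.self_not_enemy
  have hne : e ≠ i := fun hh => hie (hh ▸ he)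
  have hne' : e' ≠ i := fun hh => hie (hh ▸ he')
  have hni : i ≠ e := fun hh => hie (hh ▸ he)
  have hni' : i ≠ e' := fun hh => hie (hh ▸ he')
  obtain ⟨h1, h2⟩ := h
  rcases heC with heC | heC <;>
  · simp only [strictOf, FENPref.coalMinus]
    tauto

/-- The target pair set whose cardinality is `δ⁻(⊵, C)`. -/
def Tset (pr : FENPref P i) (C : Finset P) : Set (P × P) :=
  {p | (p.1 = i ∨ (p.1 ∈ pr.enemies ∧ strictOf pr.Rm p.1 p.2)) ∧
    p.2 ∈ pr.enemies ∧ p.2 ∈ C}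

theorem Tset_finite : (Tset pr C).Finite := by
  apply Set.Finite.subset (Set.finite_coe_iff.1 inferInstance :
    (↑((insert i pr.enemies) ×ˢ pr.enemies) : Set (P × P)).Finite)
  rintro ⟨x, y⟩ ⟨hx, hy, _⟩
  simp only [Finset.coe_product, Set.mem_prod, Finset.mem_coe, Finset.mem_insert]
  rcases hx with hx | ⟨hx, _⟩
  · exact ⟨Or.inl hx, hy⟩
  · exact ⟨Or.inr hx, hy⟩

/-- The kendall set of any pair of linear extensions contains `Tset`. -/
theorem Tset_subset_kendall {α β : P → P → Prop}
    (hα : IsLinExtOn (insert i pr.enemies) pr.prefMinus α)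
    (hβ : IsLinExtOn (insert i pr.enemies) (pr.coalMinus C) β) :
    Tset pr C ⊆ {p : P × P | p.1 ∈ insert i pr.enemies ∧ p.2 ∈ insert i pr.enemies ∧
      α p.1 p.2 ∧ β p.2 p.1} := by
  rintro ⟨x, y⟩ ⟨hx, hyE, hyC⟩
  have hyS : y ∈ insert i pr.enemies := Finset.mem_insert_of_mem hyE
  have hiS : i ∈ insert i pr.enemies := Finset.mem_insert_self _ _
  rcases hx with hx | ⟨hxE, hs⟩
  · subst hx
    refine ⟨hiS, hyS, ?_, ?_⟩
    · exact hα.extend _ hiS _ hyS ((strict_prefMinus_iff pr).2 (Or.inl ⟨rfl, hyE⟩))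
    · exact hβ.extend _ hyS _ hiS (strict_coalMinus_enemy_in pr C hyE hyC)
  · have hxS : x ∈ insert i pr.enemies := Finset.mem_insert_of_mem hxE
    refine ⟨hxS, hyS, ?_, ?_⟩
    · exact hα.extend _ hxS _ hyS ((strict_prefMinus_iff pr).2 (Or.inr ⟨hxE, hyE, hs⟩))
    · exact hβ.extend _ hyS _ hxS (strict_coalMinus_rev pr C hxE hyE hs hyC)

/-- For the refinement of `prefMinus` by `β`, the kendall set is exactly `Tset`. -/
theorem kendall_eq_Tset {β : P → P → Prop}
    (hβ : IsLinExtOn (insert i pr.enemies) (pr.coalMinus C) β) :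
    {p : P × P | p.1 ∈ insert i pr.enemies ∧ p.2 ∈ insert i pr.enemies ∧
      (strictOf pr.prefMinus p.1 p.2 ∨ (indiffOf pr.prefMinus p.1 p.2 ∧ β p.1 p.2)) ∧
      β p.2 p.1} = Tset pr C := by
  have hα : IsLinExtOn (insert i pr.enemies) pr.prefMinus
      (fun x y => strictOf pr.prefMinus x y ∨ (indiffOf pr.prefMinus x y ∧ β x y)) :=
    refine_linext (prefMinus_trans pr) (prefMinus_total pr) hβ.irrefl hβ.trans hβ.total
  apply Set.Subset.antisymm
  · rintro ⟨x, y⟩ ⟨hxS, hyS, hxy, hyx⟩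
    have hxy' : strictOf pr.prefMinus x y := by
      rcases hxy with h | ⟨_, hb⟩
      · exact h
      · exact absurd hyx (hβ.asym hxS hyS hb)
    rcases (strict_prefMinus_iff pr).1 hxy' with ⟨hx, hyE⟩ | ⟨hxE, hyE, hs⟩
    · subst hx
      by_cases hyC : y ∈ C
      · exact ⟨Or.inl rfl, hyE, hyC⟩
      · exact absurd hyx (hβ.asym hxS hyS
          (hβ.extend _ hxS _ hyS (strict_coalMinus_enemy_out pr C hyE hyC)))
    · by_cases hyC : y ∈ C
      · exact ⟨Or.inr ⟨hxE, hs⟩, hyE, hyC⟩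
      · exact absurd hyx (hβ.asym hxS hyS (hβ.extend _ hxS _ hyS
          (strict_coalMinus_fwd pr C hxE hyE hs hyC (em _))))
  · exact Tset_subset_kendall pr C hα hβ

/-- `δ⁻(⊵, C)` equals the cardinality of `Tset`. -/
theorem deltaMinus_eq_ncard : pr.deltaMinus C = (Tset pr C).ncard := by
  unfold FENPref.deltaMinus dirTau
  have key : ∀ β : P → P → Prop, IsLinExtOn (insert i pr.enemies) (pr.coalMinus C) β →
      sInf {m : ℕ | ∃ A : P → P → Prop, IsLinExtOn (insert i pr.enemies) pr.prefMinus A ∧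
        m = kendallTau (insert i pr.enemies) A β} = (Tset pr C).ncard := by
    intro β hβ
    have hα : IsLinExtOn (insert i pr.enemies) pr.prefMinus
        (fun x y => strictOf pr.prefMinus x y ∨ (indiffOf pr.prefMinus x y ∧ β x y)) :=
      refine_linext (prefMinus_trans pr) (prefMinus_total pr) hβ.irrefl hβ.trans hβ.total
    have hmem : (Tset pr C).ncard ∈ {m : ℕ | ∃ A : P → P → Prop,
        IsLinExtOn (insert i pr.enemies) pr.prefMinus A ∧
        m = kendallTau (insert i pr.enemies) A β} := by
      refine ⟨_, hα, ?_⟩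
      unfold kendallTau
      rw [kendall_eq_Tset pr C hβ]
    apply le_antisymm (Nat.sInf_le hmem)
    apply le_csInf ⟨_, hmem⟩
    rintro m ⟨A, hA, rfl⟩
    unfold kendallTau
    have hsub := Tset_subset_kendall pr C hA hβ
    have hfin : {p : P × P | p.1 ∈ insert i pr.enemies ∧ p.2 ∈ insert i pr.enemies ∧
        A p.1 p.2 ∧ β p.2 p.1}.Finite := by
      apply Set.Finite.subset (Set.finite_coe_iff.1 inferInstance :
        (↑((insert i pr.enemies) ×ˢ (insert i pr.enemies)) : Set (P × P)).Finite)
      rintro ⟨x, y⟩ ⟨hx, hy, _⟩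
      simp only [Finset.coe_product, Set.mem_prod, Finset.mem_coe]
      exact ⟨hx, hy⟩
    exact Set.ncard_le_ncard hsub hfin
  have hne : ∃ β : P → P → Prop, IsLinExtOn (insert i pr.enemies) (pr.coalMinus C) β :=
    exists_linext (coalMinus_trans pr C) (coalMinus_total pr C)
  have : {n : ℕ | ∃ B : P → P → Prop, IsLinExtOn (insert i pr.enemies) (pr.coalMinus C) B ∧
      n = sInf {m : ℕ | ∃ A : P → P → Prop,
        IsLinExtOn (insert i pr.enemies) pr.prefMinus A ∧
        m = kendallTau (insert i pr.enemies) A B}} = {(Tset pr C).ncard} := by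
    apply Set.eq_singleton_iff_unique_mem.2
    constructor
    · obtain ⟨β, hβ⟩ := hne
      exact ⟨β, hβ, (key β hβ).symm⟩
    · rintro n ⟨β, hβ, rfl⟩
      exact key β hβ
  rw [this, csSup_singleton]

end AuxDev

/-- If there is an injection `ψ : A ∩ N⁻_i → B ∩ N⁻_i` with `k ⊵_i ψ(k)` for every
`k ∈ A ∩ N⁻_i`, then `δ⁻(⊵_i, A) ≤ δ⁻(⊵_i, B)`. -/
theorem deltaMinus_mono {P : Type*} [DecidableEq P] {i : P} (pr : FENPref P i)
    (A B : Finset P) (hiA : i ∈ A) (hiB : i ∈ B) (ψ : P → P)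
    (hmaps : ∀ k ∈ A ∩ pr.enemies, ψ k ∈ B ∩ pr.enemies)
    (hinj : Set.InjOn ψ ↑(A ∩ pr.enemies))
    (hpref : ∀ k ∈ A ∩ pr.enemies, pr.Rm k (ψ k)) :
    pr.deltaMinus A ≤ pr.deltaMinus B := by
  rw [deltaMinus_eq_ncard, deltaMinus_eq_ncard]
  have hE := pr.self_not_enemy
  refine Set.ncard_le_ncard_of_injOn (fun p => (p.1, ψ p.2)) ?_ ?_ (Tset_finite pr B)
  · rintro ⟨x, y⟩ ⟨hx, hyE, hyA⟩
    have hyAE : y ∈ A ∩ pr.enemies := Finset.mem_inter.2 ⟨hyA, hyE⟩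
    have hψ := Finset.mem_inter.1 (hmaps y hyAE)
    refine ⟨?_, hψ.2, hψ.1⟩
    rcases hx with hx | ⟨hxE, hs⟩
    · exact Or.inl hx
    · refine Or.inr ⟨hxE, ?_, fun h => hs.2 ?_⟩
      · exact pr.wo_m.trans x hxE y hyE (ψ y) hψ.2 hs.1 (hpref y hyAE)
      · exact pr.wo_m.trans y hyE (ψ y) hψ.2 x hxE (hpref y hyAE) h
  · rintro ⟨x, y⟩ ⟨_, hyE, hyA⟩ ⟨x', y'⟩ ⟨_, hyE', hyA'⟩ heq
    have h1 : x = x' := congrArg Prod.fst heq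
    have h2 : ψ y = ψ y' := congrArg Prod.snd heq
    have h3 : y = y' := hinj (by simpa using Finset.mem_inter.2 ⟨hyA, hyE⟩)
      (by simpa using Finset.mem_inter.2 ⟨hyA', hyE'⟩) h2
    simp [h1, h3]
end
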